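/- arXiv:0709.3140 — 3 statements merged into one kernel-verified Lean document; each statement's English description precedes it below -/
import Mathlib

section
/- For every finite simple graph G with at least one vertex, χ(G) ≤ λ₁(G) + 1, where λ₁(G) is the largest eigenvalue of the adjacency matrix of G. -/
set_option linter.unusedSectionVars false

open Finset SimpleGraph

namespace GraphEnergy

variable {V : Type*} [Fintype V] [DecidableEq V]

/-- The real adjacency matrix of a simple graph. -/
noncomputable def adjMat (G : SimpleGraph V) : Matrix V V ℝ :=
  letI := Classical.decRel G.Adj
  G.adjMatrix ℝ

theorem adjMat_isHermitian (G : SimpleGraph V) : (adjMat G).IsHermitian := by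
  letI := Classical.decRel G.Adj
  ext i j
  simp [adjMat, Matrix.conjTranspose_apply, SimpleGraph.adjMatrix_apply, SimpleGraph.adj_comm]

/-- The eigenvalues (with multiplicity) of the real adjacency matrix of `G`, indexed by `V`. -/
noncomputable def eig (G : SimpleGraph V) : V → ℝ :=
  (adjMat_isHermitian G).eigenvalues

/-- The energy of a graph: the sum of the absolute values of its adjacency eigenvalues. -/
noncomputable def energy (G : SimpleGraph V) : ℝ :=
  ∑ i, |eig G i|

/-- The rank of the adjacency matrix of `G` over `ℝ`. -/
noncomputable def grank (G : SimpleGraph V) : ℕ :=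
  (adjMat G).rank

open Matrix in
/-- Rayleigh quotient bound: for a Hermitian matrix, `xᵀAx ≤ λmax ‖x‖²`. -/
lemma rayleigh_le {A : Matrix V V ℝ} (hA : A.IsHermitian) {lam : ℝ}
    (hlam : ∀ i, hA.eigenvalues i ≤ lam) (x : V → ℝ) :
    x ⬝ᵥ (A *ᵥ x) ≤ lam * (x ⬝ᵥ x) := by
  set U : Matrix V V ℝ := (hA.eigenvectorUnitary : Matrix V V ℝ) with hUdef
  have hU : U * star U = 1 := Matrix.mem_unitaryGroup_iff.mp hA.eigenvectorUnitary.2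
  set y : V → ℝ := star U *ᵥ x with hy
  have hsUT : star U = Uᵀ := by
    rw [Matrix.star_eq_conjTranspose, Matrix.conjTranspose_eq_transpose_of_trivial]
  have hvm : x ᵥ* U = y := by rw [hy, hsUT, Matrix.mulVec_transpose]
  have h1 : x ⬝ᵥ (A *ᵥ x) = ∑ i, hA.eigenvalues i * (y i * y i) := by
    conv_lhs => rw [hA.spectral_theorem, Unitary.conjStarAlgAut_apply]
    rw [← Matrix.mulVec_mulVec, ← Matrix.mulVec_mulVec, Matrix.dotProduct_mulVec, hvm, ← hy]
    simp only [dotProduct, Matrix.mulVec_diagonal, Function.comp_apply,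
      RCLike.ofReal_real_eq_id, id_eq]
    exact Finset.sum_congr rfl fun i _ => by ring
  have h2 : x ⬝ᵥ x = ∑ i, y i * y i := by
    have key : x ⬝ᵥ (U *ᵥ y) = x ⬝ᵥ x := by
      rw [hy, Matrix.mulVec_mulVec, hU, Matrix.one_mulVec]
    rw [← key, Matrix.dotProduct_mulVec, hvm, dotProduct]
  rw [h1, h2, Finset.mul_sum]
  exact Finset.sum_le_sum fun i _ =>
    mul_le_mul_of_nonneg_right (hlam i) (mul_self_nonneg _)

open Matrix in
/-- Every nonempty vertex subset contains a vertex of small degree within the subset. -/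
lemma exists_small_degree (G : SimpleGraph V) [DecidableRel G.Adj] {lam : ℝ}
    (hray : ∀ x : V → ℝ, x ⬝ᵥ ((G.adjMatrix ℝ) *ᵥ x) ≤ lam * (x ⬝ᵥ x))
    (S : Finset V) (hS : S.Nonempty) :
    ∃ v ∈ S, ((S.filter (G.Adj v)).card : ℝ) ≤ lam := by
  by_contra hcon
  push_neg at hcon
  set x : V → ℝ := fun v => if v ∈ S then 1 else 0 with hx
  have hmv : ∀ v, ((G.adjMatrix ℝ) *ᵥ x) v = ((S.filter (G.Adj v)).card : ℝ) := by
    intro v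
    simp only [Matrix.mulVec, dotProduct, hx, mul_ite, mul_one, mul_zero,
      Finset.sum_ite_mem, Finset.univ_inter, SimpleGraph.adjMatrix_apply, Finset.sum_boole]
  have hAx : x ⬝ᵥ ((G.adjMatrix ℝ) *ᵥ x) = ∑ v ∈ S, ((S.filter (G.Adj v)).card : ℝ) := by
    simp only [dotProduct, hx, ite_mul, one_mul, zero_mul, Finset.sum_ite_mem,
      Finset.univ_inter]
    exact Finset.sum_congr rfl fun v _ => hmv v
  have hxx : x ⬝ᵥ x = (S.card : ℝ) := by
    simp [dotProduct, hx, Finset.sum_ite_mem]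
  have h1 := hray x
  rw [hAx, hxx] at h1
  have h2 : ∑ v ∈ S, lam < ∑ v ∈ S, ((S.filter (G.Adj v)).card : ℝ) :=
    Finset.sum_lt_sum_of_nonempty hS fun v hv => hcon v hv
  rw [Finset.sum_const, nsmul_eq_mul, mul_comm] at h2
  linarith

/-- Greedy coloring: if every nonempty subset has a vertex with at most `k` neighbours inside
the subset, then every subset can be properly coloured with `k + 1` colours. -/
lemma greedy (G : SimpleGraph V) [DecidableRel G.Adj] (k : ℕ)
    (h : ∀ S : Finset V, S.Nonempty → ∃ v ∈ S, (S.filter (G.Adj v)).card ≤ k)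
    (S : Finset V) :
    ∃ C : V → Fin (k + 1), ∀ v ∈ S, ∀ w ∈ S, G.Adj v w → C v ≠ C w := by
  induction S using Finset.strongInduction with
  | _ S ih =>
    rcases S.eq_empty_or_nonempty with rfl | hS
    · exact ⟨fun _ => 0, by simp⟩
    obtain ⟨v, hv, hdeg⟩ := h S hS
    obtain ⟨C, hC⟩ := ih (S.erase v) (Finset.erase_ssubset hv)
    have hcard : (((S.erase v).filter (G.Adj v)).image C).card < k + 1 := by
      calc (((S.erase v).filter (G.Adj v)).image C).card
          ≤ ((S.erase v).filter (G.Adj v)).card := Finset.card_image_le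
        _ ≤ (S.filter (G.Adj v)).card :=
            Finset.card_le_card (Finset.filter_subset_filter _ (Finset.erase_subset _ _))
        _ ≤ k := hdeg
        _ < k + 1 := Nat.lt_succ_self k
    have : ∃ c : Fin (k + 1), c ∉ ((S.erase v).filter (G.Adj v)).image C := by
      by_contra hc
      push_neg at hc
      have := Finset.card_le_card (fun c _ => hc c : (Finset.univ : Finset (Fin (k+1))) ⊆ _)
      simp [Fintype.card_fin] at this
      omega
    obtain ⟨c, hc⟩ := this
    refine ⟨Function.update C v c, ?_⟩
    intro a ha b hb hab
    rcases eq_or_ne a v with rfl | hav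
    · rcases eq_or_ne b a with rfl | hba
      · exact absurd hab (G.irrefl)
      · rw [Function.update_self, Function.update_of_ne hba]
        intro heq
        exact hc (by rw [heq]; exact Finset.mem_image_of_mem C (Finset.mem_filter.mpr
          ⟨Finset.mem_erase.mpr ⟨hba, hb⟩, hab⟩))
    · rcases eq_or_ne b v with rfl | hbv
      · rw [Function.update_of_ne hav, Function.update_self]
        intro heq
        exact hc (by rw [← heq]; exact Finset.mem_image_of_mem C (Finset.mem_filter.mpr
          ⟨Finset.mem_erase.mpr ⟨hav, ha⟩, hab.symm⟩))
      · rw [Function.update_of_ne hav, Function.update_of_ne hbv]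
        exact hC a (Finset.mem_erase.mpr ⟨hav, ha⟩) b (Finset.mem_erase.mpr ⟨hbv, hb⟩) hab

/-- Wilf's theorem: `χ(G) ≤ λ₁(G) + 1`, where `λ₁(G)` is the largest adjacency eigenvalue. -/
theorem chromaticNumber_le_max_eigenvalue_add_one [Nonempty V] (G : SimpleGraph V) :
    (G.chromaticNumber.toNat : ℝ) ≤ Finset.univ.sup' Finset.univ_nonempty (eig G) + 1 := by
  classical
  set lam : ℝ := Finset.univ.sup' Finset.univ_nonempty (eig G) with hlamdef
  have hlam : ∀ i, (adjMat_isHermitian G).eigenvalues i ≤ lam :=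
    fun i => Finset.le_sup' (eig G) (Finset.mem_univ i)
  have hray : ∀ x : V → ℝ, dotProduct x ((G.adjMatrix ℝ).mulVec x)
      ≤ lam * dotProduct x x := by
    intro x
    have h := rayleigh_le (adjMat_isHermitian G) hlam x
    have heq : adjMat G = G.adjMatrix ℝ := by
      ext i j; simp [adjMat]
    rwa [heq] at h
  -- λ₁ ≥ 0
  obtain ⟨v₀⟩ := ‹Nonempty V›
  have hlam0 : (0 : ℝ) ≤ lam := by
    obtain ⟨v, -, hvle⟩ := exists_small_degree G hray {v₀} ⟨v₀, Finset.mem_singleton_self v₀⟩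
    exact le_trans (Nat.cast_nonneg _) hvle
  set k : ℕ := ⌊lam⌋₊ with hk
  have hmin : ∀ S : Finset V, S.Nonempty → ∃ v ∈ S, (S.filter (G.Adj v)).card ≤ k := by
    intro S hS
    obtain ⟨v, hv, hle⟩ := exists_small_degree G hray S hS
    exact ⟨v, hv, Nat.le_floor hle⟩
  obtain ⟨C, hC⟩ := greedy G k hmin Finset.univ
  have hcol : G.Colorable (k + 1) :=
    ⟨SimpleGraph.Coloring.mk C fun {a b} hab =>
      hC a (Finset.mem_univ a) b (Finset.mem_univ b) hab⟩
  have hχ : G.chromaticNumber ≤ (k + 1 : ℕ) := hcol.chromaticNumber_le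
  have hχn : G.chromaticNumber.toNat ≤ k + 1 := by
    have := ENat.toNat_le_toNat hχ (by exact_mod_cast ENat.coe_ne_top (k+1))
    rwa [ENat.toNat_natCast] at this
  calc (G.chromaticNumber.toNat : ℝ) ≤ (k : ℝ) + 1 := by exact_mod_cast hχn
    _ ≤ lam + 1 := by
        have := Nat.floor_le hlam0
        linarith

end GraphEnergy
end

section
/- Every connected finite simple graph whose adjacency matrix has rank 2 is a complete bipartite graph, i.e., is isomorphic to K_{r,s} for some positive integers r and s. -/
set_option linter.unusedSectionVars false

open Finset SimpleGraph

namespace GraphEnergy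

variable {V : Type*} [Fintype V] [DecidableEq V]

set_option maxHeartbeats 1000000
lemma adjMat_eq_one (G : SimpleGraph V) {i j : V} (h : G.Adj i j) : adjMat G i j = 1 := by
  unfold adjMat; simp [h]

lemma adjMat_eq_zero (G : SimpleGraph V) {i j : V} (h : ¬ G.Adj i j) : adjMat G i j = 0 := by
  unfold adjMat; simp [h]

lemma adjMat_zero_or_one (G : SimpleGraph V) (i j : V) :
    adjMat G i j = 0 ∨ adjMat G i j = 1 := by
  by_cases h : G.Adj i j
  · exact Or.inr (adjMat_eq_one G h)
  · exact Or.inl (adjMat_eq_zero G h)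

lemma adjMat_symm (G : SimpleGraph V) (i j : V) : adjMat G i j = adjMat G j i := by
  by_cases h : G.Adj i j
  · rw [adjMat_eq_one G h, adjMat_eq_one G h.symm]
  · rw [adjMat_eq_zero G h, adjMat_eq_zero G (fun h' => h h'.symm)]

lemma adj_iff_adjMat_eq_one (G : SimpleGraph V) (i j : V) :
    G.Adj i j ↔ adjMat G i j = 1 := by
  refine ⟨adjMat_eq_one G, fun h1 => ?_⟩
  by_contra h
  rw [adjMat_eq_zero G h] at h1
  norm_num at h1

open Matrix in
/-- Every row of a connected rank-2 graph's adjacency matrix equals one of the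
two rows attached to a fixed edge. -/
lemma row_dichotomy (G : SimpleGraph V) (hconn : G.Connected) (hrank : grank G = 2)
    {u v : V} (huv : G.Adj u v) (w : V) :
    adjMat G w = adjMat G u ∨ adjMat G w = adjMat G v := by
  classical
  set M := adjMat G with hM
  -- M is symmetric
  have hMT : Mᵀ = M := by
    ext i j; exact adjMat_symm G j i
  -- rank = dim of span of rows
  have hspan : Module.finrank ℝ (Submodule.span ℝ (Set.range M)) = 2 := by
    have h := (Matrix.rank_eq_finrank_span_cols M).symm
    rw [Matrix.col, hMT] at h
    rw [h]; exact hrank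
  -- rows at u, v are independent
  have hMuv : M u v = 1 := adjMat_eq_one G huv
  have hMvu : M v u = 1 := adjMat_eq_one G huv.symm
  have hMuu : M u u = 0 := adjMat_eq_zero G (G.loopless.irrefl u)
  have hMvv : M v v = 0 := adjMat_eq_zero G (G.loopless.irrefl v)
  have hli : LinearIndependent ℝ ![M u, M v] := by
    rw [LinearIndependent.pair_iff]
    intro s t hst
    have h1 := congrFun hst v
    have h2 := congrFun hst u
    simp only [Pi.add_apply, Pi.smul_apply, smul_eq_mul, Pi.zero_apply, hMuv, hMvv, hMuu,
      hMvu, mul_one, mul_zero, add_zero, zero_add] at h1 h2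
    exact ⟨h1, h2⟩
  -- span of the two rows equals the full row span
  have hle : Submodule.span ℝ ({M u, M v} : Set (V → ℝ)) ≤ Submodule.span ℝ (Set.range M) := by
    apply Submodule.span_le.2
    rintro x (rfl | rfl) <;> exact Submodule.subset_span ⟨_, rfl⟩
  have hfr2 : Module.finrank ℝ (Submodule.span ℝ ({M u, M v} : Set (V → ℝ))) = 2 := by
    have : Set.range ![M u, M v] = ({M u, M v} : Set (V → ℝ)) := by
      simp [Set.range, Matrix.cons_val_zero, Matrix.cons_val_one]
      ext x; constructor
      · rintro (rfl | rfl) <;> simp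
      · rintro (rfl | rfl)
        exacts [Or.inl rfl, Or.inr rfl]
    rw [← this, finrank_span_eq_card hli, Fintype.card_fin]
  have hspaneq : Submodule.span ℝ ({M u, M v} : Set (V → ℝ))
      = Submodule.span ℝ (Set.range M) :=
    Submodule.eq_of_le_of_finrank_eq hle (by rw [hfr2, hspan])
  -- row w is a combination of rows u and v
  have hwmem : M w ∈ Submodule.span ℝ ({M u, M v} : Set (V → ℝ)) := by
    rw [hspaneq]; exact Submodule.subset_span ⟨w, rfl⟩
  obtain ⟨a, b, hab⟩ := Submodule.mem_span_pair.1 hwmem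
  have hb : M w u = b := by
    have h := congrFun hab u
    simpa [hMuu, hMvu] using h.symm
  have ha : M w v = a := by
    have h := congrFun hab v
    simpa [hMuv, hMvv] using h.symm
  rcases adjMat_zero_or_one G w v with hav | hav <;>
    rcases adjMat_zero_or_one G w u with hbv | hbv <;>
    rw [← hM] at hav hbv
  · -- a = 0, b = 0 : w isolated, contradiction with connectedness
    exfalso
    have hMw : M w = 0 := by
      rw [← hab, ← ha, ← hb, hav, hbv]; simp
    have hwu : w ≠ u := by
      intro h; rw [h] at hMw
      have := congrFun hMw v
      rw [hMuv] at this; norm_num at this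
    obtain ⟨p⟩ := hconn w u
    cases p with
    | nil => exact hwu rfl
    | cons h _ =>
      rename_i b' _
      have : M w b' = 1 := adjMat_eq_one G h
      rw [hMw] at this
      norm_num at this
  ·
    right
    rw [← hab, ← ha, ← hb, hav, hbv]; simp
  · left
    rw [← hab, ← ha, ← hb, hav, hbv]; simp
  · -- a = 1, b = 1 : contradiction at w
    exfalso
    have hw : M w = M u + M v := by rw [← hab, ← ha, ← hb, hav, hbv]; simp
    have h0 : M w w = 0 := adjMat_eq_zero G (G.loopless.irrefl w)
    have h1 : M u w = 1 := by
      have := adjMat_symm G u w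
      rw [← hM] at this
      rw [this]; exact hbv
    have h2 : M v w ≥ 0 := by
      rcases adjMat_zero_or_one G v w with h | h <;> rw [← hM] at h <;> rw [h] <;> norm_num
    have := congrFun hw w
    rw [h0, Pi.add_apply, h1] at this
    linarith


/-- A connected graph of adjacency rank `2` is a complete bipartite graph. -/
theorem completeBipartite_of_rank_two (G : SimpleGraph V) (hconn : G.Connected)
    (hrank : grank G = 2) :
    ∃ r s : ℕ, 0 < r ∧ 0 < s ∧
      Nonempty (G ≃g completeBipartiteGraph (Fin r) (Fin s)) := by
  classical
  -- there is an edge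
  obtain ⟨u, v, huv⟩ : ∃ u v : V, G.Adj u v := by
    by_contra h
    push_neg at h
    have hM0 : adjMat G = 0 := by
      ext i j; exact adjMat_eq_zero G (h i j)
    have : grank G = 0 := by
      unfold grank; rw [hM0]; exact Matrix.rank_zero
    omega
  have hMuMv : adjMat G u ≠ adjMat G v := by
    intro h
    have h2 := congrFun h v
    rw [adjMat_eq_one G huv, adjMat_eq_zero G (G.loopless.irrefl v)] at h2
    norm_num at h2
  set p : V → Prop := fun w => adjMat G w = adjMat G u with hp
  have hdich : ∀ w, ¬ p w ↔ adjMat G w = adjMat G v := by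
    intro w
    constructor
    · intro hw
      rcases row_dichotomy G hconn hrank huv w with h | h
      · exact absurd h hw
      · exact h
    · intro hw hw'
      exact hMuMv (hw'.symm.trans hw)
  -- adjacency characterization
  have hadj : ∀ a b : V, G.Adj a b ↔ ((p a ∧ ¬ p b) ∨ (¬ p a ∧ p b)) := by
    intro a b
    by_cases ha : p a <;> by_cases hb : p b
    · constructor
      · intro hab
        exfalso
        have h1 : adjMat G a b = 1 := adjMat_eq_one G hab
        have h2 : adjMat G a b = 0 := by
          rw [congrFun ha b, adjMat_symm G u b, congrFun hb u]
          exact adjMat_eq_zero G (G.loopless.irrefl u)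
        rw [h1] at h2; norm_num at h2
      · rintro (⟨_, h⟩ | ⟨h, _⟩)
        · exact absurd hb h
        · exact absurd ha h
    · constructor
      · intro _; exact Or.inl ⟨ha, hb⟩
      · intro _
        rw [adj_iff_adjMat_eq_one]
        rw [congrFun ha b, adjMat_symm G u b, congrFun ((hdich b).1 hb) u]
        exact adjMat_eq_one G huv.symm
    · constructor
      · intro _; exact Or.inr ⟨ha, hb⟩
      · intro _
        rw [adj_iff_adjMat_eq_one]
        rw [congrFun ((hdich a).1 ha) b, adjMat_symm G v b, congrFun hb v]
        exact adjMat_eq_one G huv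
    · constructor
      · intro hab
        exfalso
        have h1 : adjMat G a b = 1 := adjMat_eq_one G hab
        have h2 : adjMat G a b = 0 := by
          rw [congrFun ((hdich a).1 ha) b, adjMat_symm G v b, congrFun ((hdich b).1 hb) v]
          exact adjMat_eq_zero G (G.loopless.irrefl v)
        rw [h1] at h2; norm_num at h2
      · rintro (⟨h, _⟩ | ⟨_, h⟩)
        · exact absurd h ha
        · exact absurd h hb
  -- build the isomorphism
  refine ⟨Fintype.card {w // p w}, Fintype.card {w // ¬ p w},
    Fintype.card_pos_iff.2 ⟨⟨u, rfl⟩⟩, Fintype.card_pos_iff.2 ⟨⟨v, (hdich v).2 rfl⟩⟩, ?_⟩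
  set eA := Fintype.equivFin {w // p w}
  set eB := Fintype.equivFin {w // ¬ p w}
  set e : V ≃ (Fin (Fintype.card {w // p w}) ⊕ Fin (Fintype.card {w // ¬ p w})) :=
    (Equiv.sumCompl p).symm.trans (Equiv.sumCongr eA eB) with he
  have heL : ∀ a : V, p a → ∃ x, e a = Sum.inl x := by
    intro a ha
    refine ⟨eA ⟨a, ha⟩, ?_⟩
    simp [he, Equiv.sumCompl_symm_apply_of_pos ha]
  have heR : ∀ a : V, ¬ p a → ∃ x, e a = Sum.inr x := by
    intro a ha
    refine ⟨eB ⟨a, ha⟩, ?_⟩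
    simp [he, Equiv.sumCompl_symm_apply_of_neg ha]
  refine ⟨⟨e, ?_⟩⟩
  intro a b
  show (completeBipartiteGraph _ _).Adj (e a) (e b) ↔ G.Adj a b
  rw [hadj a b]
  by_cases ha : p a <;> by_cases hb : p b
  · obtain ⟨x, hx⟩ := heL a ha; obtain ⟨y, hy⟩ := heL b hb
    simp only [hx, hy, completeBipartiteGraph]
    simp; tauto
  · obtain ⟨x, hx⟩ := heL a ha; obtain ⟨y, hy⟩ := heR b hb
    simp only [hx, hy, completeBipartiteGraph]
    simp; tauto
  · obtain ⟨x, hx⟩ := heR a ha; obtain ⟨y, hy⟩ := heL b hb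
    simp only [hx, hy, completeBipartiteGraph]
    simp; tauto
  · obtain ⟨x, hx⟩ := heR a ha; obtain ⟨y, hy⟩ := heR b hb
    simp only [hx, hy, completeBipartiteGraph]
    simp; tauto
end GraphEnergy
end

section
/- If a finite simple graph G contains 2K₂ (the disjoint union of two edges) as an induced subgraph, then E(G) ≥ 2χ(G). -/
set_option linter.unusedSectionVars false

open Finset SimpleGraph

namespace GraphEnergy

variable {V : Type*} [Fintype V] [DecidableEq V]

/-- The disjoint union of two simple graphs. -/
def disjUnion {α β : Type*} (G : SimpleGraph α) (H : SimpleGraph β) : SimpleGraph (α ⊕ β) :=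
  SimpleGraph.fromRel (Sum.LiftRel G.Adj H.Adj)

/-- `A n t`: the graph obtained from the complete graph `Kₙ` (on the `some` vertices) by adding
one new vertex (`none`) joined to exactly `t` vertices of `Kₙ`. -/
def A (n t : ℕ) : SimpleGraph (Option (Fin n)) :=
  SimpleGraph.fromRel (fun a b =>
    (a ≠ b ∧ a ≠ none ∧ b ≠ none) ∨ (∃ i : Fin n, a = some i ∧ b = none ∧ (i : ℕ) < t))

/-- `B n`: the graph obtained from the complete graph `Kₙ` (on the `Sum.inl` vertices) by adding
two new pendant vertices (the `Sum.inr` vertices), each adjacent to the same vertex `0` of `Kₙ`. -/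
def B (n : ℕ) : SimpleGraph (Fin n ⊕ Fin 2) :=
  SimpleGraph.fromRel (fun a b =>
    (∃ i j : Fin n, i ≠ j ∧ a = Sum.inl i ∧ b = Sum.inl j) ∨
    (∃ i : Fin n, ∃ p : Fin 2, (i : ℕ) = 0 ∧ a = Sum.inl i ∧ b = Sum.inr p))

/-- `H5`: a triangle `{0,1,2}` with two pendant vertices `3, 4` adjacent to the distinct
vertices `0` and `1` respectively. -/
def H5 : SimpleGraph (Fin 5) :=
  SimpleGraph.fromRel (fun a b =>
    (a = 0 ∧ b = 1) ∨ (a = 1 ∧ b = 2) ∨ (a = 0 ∧ b = 2) ∨ (a = 0 ∧ b = 3) ∨ (a = 1 ∧ b = 4))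

open Matrix
/-- coordinates of x in the eigenbasis -/
noncomputable def coord (G : SimpleGraph V) (x : V → ℝ) : V → ℝ :=
  (star ((Matrix.IsHermitian.eigenvectorUnitary (adjMat_isHermitian G) : Matrix V V ℝ))) *ᵥ x

lemma coord_smul (G : SimpleGraph V) (r : ℝ) (x : V → ℝ) :
    coord G (r • x) = r • coord G x := by
  simp [coord, Matrix.mulVec_smul]

lemma coord_sub (G : SimpleGraph V) (x y : V → ℝ) :
    coord G (x - y) = coord G x - coord G y := by
  simp [coord, Matrix.mulVec_sub]

lemma dot_eq_sum_coord (G : SimpleGraph V) (x : V → ℝ) :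
    x ⬝ᵥ x = ∑ j, (coord G x j)^2 := by
  have hU := (Matrix.IsHermitian.eigenvectorUnitary (adjMat_isHermitian G)).2
  have h1 : ((Matrix.IsHermitian.eigenvectorUnitary (adjMat_isHermitian G) : Matrix V V ℝ)) *
      star ((Matrix.IsHermitian.eigenvectorUnitary (adjMat_isHermitian G) : Matrix V V ℝ)) = 1 :=
    (Matrix.mem_unitaryGroup_iff.mp hU)
  have : coord G x ⬝ᵥ coord G x = x ⬝ᵥ x := by
    unfold coord
    rw [Matrix.dotProduct_mulVec, ← Matrix.mulVec_transpose]
    rw [show ((star ((Matrix.IsHermitian.eigenvectorUnitary (adjMat_isHermitian G) : Matrix V V ℝ)))ᵀ = (Matrix.IsHermitian.eigenvectorUnitary (adjMat_isHermitian G) : Matrix V V ℝ)) from ?_]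
    · rw [Matrix.mulVec_mulVec, h1, Matrix.one_mulVec]
    · ext i j
      simp [Matrix.star_apply]
  rw [← this]
  simp [dotProduct, sq]

lemma quad_eq_sum_coord (G : SimpleGraph V) (x : V → ℝ) :
    x ⬝ᵥ (adjMat G *ᵥ x) = ∑ j, eig G j * (coord G x j)^2 := by
  have hA := adjMat_isHermitian G
  conv_lhs => rw [hA.spectral_theorem]
  rw [Unitary.conjStarAlgAut_apply]
  rw [← Matrix.mulVec_mulVec, ← Matrix.mulVec_mulVec]
  rw [Matrix.dotProduct_mulVec, ← Matrix.mulVec_transpose]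
  have htr : ((Matrix.IsHermitian.eigenvectorUnitary hA : Matrix V V ℝ))ᵀ
      = star ((Matrix.IsHermitian.eigenvectorUnitary hA : Matrix V V ℝ)) := by
    ext i j; simp [Matrix.star_apply]
  rw [htr]
  show coord G x ⬝ᵥ (Matrix.diagonal _ *ᵥ coord G x) = _
  unfold dotProduct
  refine Finset.sum_congr rfl fun j _ => ?_
  simp [Matrix.mulVec_diagonal, eig]
  ring




lemma sum_eig_eq_zero (G : SimpleGraph V) : ∑ j, eig G j = 0 := by
  have hA := adjMat_isHermitian G
  have h0 : (adjMat G).trace = 0 := by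
    letI := Classical.decRel G.Adj
    exact SimpleGraph.trace_adjMatrix ℝ G
  have h1 : (adjMat G).trace = ∑ j, eig G j := by
    conv_lhs => rw [hA.spectral_theorem]
    rw [Unitary.conjStarAlgAut_apply]
    rw [Matrix.trace_mul_cycle]
    have : (star ((Matrix.IsHermitian.eigenvectorUnitary hA : Matrix V V ℝ))) *
        ((Matrix.IsHermitian.eigenvectorUnitary hA : Matrix V V ℝ)) = 1 :=
      Matrix.mem_unitaryGroup_iff'.mp (Matrix.IsHermitian.eigenvectorUnitary hA).2
    rw [this, Matrix.one_mul, Matrix.trace_diagonal]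
    simp [eig]
  rw [← h1, h0]

lemma quad_le (G : SimpleGraph V) {lam : ℝ} (hlam : ∀ j, eig G j ≤ lam) (x : V → ℝ) :
    x ⬝ᵥ (adjMat G *ᵥ x) ≤ lam * (x ⬝ᵥ x) := by
  rw [quad_eq_sum_coord, dot_eq_sum_coord, Finset.mul_sum]
  exact Finset.sum_le_sum fun j _ => mul_le_mul_of_nonneg_right (hlam j) (sq_nonneg _)

def eV (u : V) : V → ℝ := fun i => if i = u then 1 else 0

lemma eV_dot (u : V) (z : V → ℝ) : eV u ⬝ᵥ z = z u := by
  simp [eV, dotProduct]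

lemma mulVec_eV (G : SimpleGraph V) (u : V) :
    letI := Classical.decRel G.Adj
    adjMat G *ᵥ eV u = fun i => if G.Adj i u then 1 else 0 := by
  letI := Classical.decRel G.Adj
  ext i
  simp [eV, Matrix.mulVec, dotProduct, adjMat, mul_ite]

lemma eV_quad (G : SimpleGraph V) (u v : V) :
    letI := Classical.decRel G.Adj
    eV u ⬝ᵥ (adjMat G *ᵥ eV v) = if G.Adj u v then 1 else 0 := by
  rw [mulVec_eV, eV_dot]

lemma eV_dot_eV (u v : V) : eV u ⬝ᵥ eV v = if u = v then 1 else 0 := by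
  rw [eV_dot]; simp [eV, eq_comm]

lemma indicator_quad (G : SimpleGraph V) (t : Finset V) :
    letI := Classical.decRel G.Adj
    (fun i => if i ∈ t then (1:ℝ) else 0) ⬝ᵥ (adjMat G *ᵥ fun i => if i ∈ t then (1:ℝ) else 0)
      = ∑ v ∈ t, ((t.filter (G.Adj v)).card : ℝ) := by
  letI := Classical.decRel G.Adj
  simp only [dotProduct, Matrix.mulVec, adjMat, ite_mul, one_mul, zero_mul]
  rw [Finset.sum_ite_mem, Finset.univ_inter]
  refine Finset.sum_congr rfl fun v hv => ?_
  rw [Finset.card_filter]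
  push_cast
  simp only [mul_ite, mul_one, mul_zero]
  rw [Finset.sum_ite_mem, Finset.univ_inter]
  exact Finset.sum_congr rfl fun w hw => by simp [SimpleGraph.adjMatrix_apply]

lemma indicator_dot (t : Finset V) :
    (fun i => if i ∈ t then (1:ℝ) else 0) ⬝ᵥ (fun i => if i ∈ t then (1:ℝ) else 0)
      = (t.card : ℝ) := by
  simp only [dotProduct, ite_mul, one_mul, zero_mul]
  rw [Finset.sum_ite_mem, Finset.univ_inter]
  simp




lemma exists_low_degree (G : SimpleGraph V) {lam : ℝ} (hlam : ∀ j, eig G j ≤ lam)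
    (t : Finset V) (ht : t.Nonempty) :
    letI := Classical.decRel G.Adj
    ∃ v ∈ t, ((t.filter (G.Adj v)).card : ℝ) ≤ lam := by
  letI := Classical.decRel G.Adj
  by_contra hc
  push_neg at hc
  have h1 := quad_le G hlam (fun i => if i ∈ t then 1 else 0)
  rw [indicator_quad, indicator_dot] at h1
  have h2 : lam * t.card < ∑ v ∈ t, ((t.filter (G.Adj v)).card : ℝ) := by
    calc lam * t.card = ∑ _v ∈ t, lam := by rw [Finset.sum_const, nsmul_eq_mul]; ring
    _ < _ := Finset.sum_lt_sum_of_nonempty ht fun v hv => hc v hv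
  linarith

lemma greedy_s17 (G : SimpleGraph V) [DecidableRel G.Adj] (n : ℕ) (s : Finset V)
    (hs : ∀ t : Finset V, t ⊆ s → t.Nonempty → ∃ v ∈ t, (t.filter (G.Adj v)).card < n) :
    ∃ c : V → ℕ, (∀ a ∈ s, c a < n) ∧ ∀ a ∈ s, ∀ b ∈ s, G.Adj a b → c a ≠ c b := by
  induction s using Finset.strongInduction with
  | _ s ih =>
    rcases s.eq_empty_or_nonempty with rfl | hne
    · exact ⟨fun _ => 0, by simp, by simp⟩
    · obtain ⟨v, hv, hdeg⟩ := hs s (subset_refl s) hne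
      have hss : s.erase v ⊂ s := Finset.erase_ssubset hv
      obtain ⟨c, hc1, hc2⟩ := ih _ hss
        (fun t hts htne => hs t (hts.trans (Finset.erase_subset _ _)) htne)
      set N := (s.erase v).filter (G.Adj v) with hN
      have himg : (N.image c).card < n := by
        refine lt_of_le_of_lt Finset.card_image_le (lt_of_le_of_lt ?_ hdeg)
        exact Finset.card_le_card (Finset.filter_subset_filter _ (Finset.erase_subset _ _))
      have hns : ¬ (Finset.range n ⊆ N.image c) := fun hsub => by
        have := Finset.card_le_card hsub
        simp only [Finset.card_range] at this
        omega
      obtain ⟨m, hm, hmnot⟩ := Finset.not_subset.mp hns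
      rw [Finset.mem_range] at hm
      refine ⟨Function.update c v m, ?_, ?_⟩
      · intro a ha
        by_cases hav : a = v
        · subst hav; simpa using hm
        · rw [Function.update_of_ne hav]
          exact hc1 a (Finset.mem_erase.mpr ⟨hav, ha⟩)
      · intro a ha b hb hab
        by_cases hav : a = v <;> by_cases hbv : b = v
        · rw [hav, hbv] at hab; exact absurd hab (G.loopless.irrefl v)
        · subst hav
          rw [Function.update_self, Function.update_of_ne hbv]
          intro hEq
          exact hmnot (Finset.mem_image.mpr ⟨b,
            Finset.mem_filter.mpr ⟨Finset.mem_erase.mpr ⟨hbv, hb⟩, hab⟩, hEq.symm⟩)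
        · subst hbv
          rw [Function.update_self, Function.update_of_ne hav]
          intro hEq
          exact hmnot (Finset.mem_image.mpr ⟨a,
            Finset.mem_filter.mpr ⟨Finset.mem_erase.mpr ⟨hav, ha⟩, G.adj_symm hab⟩, hEq⟩)
        · rw [Function.update_of_ne hav, Function.update_of_ne hbv]
          exact hc2 a (Finset.mem_erase.mpr ⟨hav, ha⟩) b (Finset.mem_erase.mpr ⟨hbv, hb⟩) hab

lemma colorable_of (G : SimpleGraph V) [DecidableRel G.Adj] (n : ℕ)
    (h : ∀ t : Finset V, t.Nonempty → ∃ v ∈ t, (t.filter (G.Adj v)).card < n) :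
    G.Colorable n := by
  obtain ⟨c, hc1, hc2⟩ := greedy_s17 G n Finset.univ (fun t _ ht => h t ht)
  exact ⟨SimpleGraph.Coloring.mk (fun v => (⟨c v, hc1 v (Finset.mem_univ v)⟩ : Fin n))
    (fun {a b} hab => by
      simpa [Fin.mk.injEq] using hc2 a (Finset.mem_univ a) b (Finset.mem_univ b) hab)⟩






lemma pair_quad (G : SimpleGraph V) {u v : V} (hadj : G.Adj u v) :
    (eV u + eV v) ⬝ᵥ (adjMat G *ᵥ (eV u + eV v)) = 2 := by
  letI := Classical.decRel G.Adj
  rw [Matrix.mulVec_add, dotProduct_add, add_dotProduct, add_dotProduct,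
    eV_quad, eV_quad, eV_quad, eV_quad]
  simp [hadj, G.adj_symm hadj, G.irrefl]
  norm_num

lemma pair_cross (G : SimpleGraph V) {u v w z : V} (h1 : ¬G.Adj u w) (h2 : ¬G.Adj u z)
    (h3 : ¬G.Adj v w) (h4 : ¬G.Adj v z) :
    (eV u + eV v) ⬝ᵥ (adjMat G *ᵥ (eV w + eV z)) = 0 := by
  letI := Classical.decRel G.Adj
  rw [Matrix.mulVec_add, dotProduct_add, add_dotProduct, add_dotProduct,
    eV_quad, eV_quad, eV_quad, eV_quad]
  simp [h1, h2, h3, h4]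

lemma pair_dot_self {u v : V} (huv : u ≠ v) : (eV u + eV v) ⬝ᵥ (eV u + eV v) = 2 := by
  rw [dotProduct_add, add_dotProduct, add_dotProduct,
    eV_dot_eV, eV_dot_eV, eV_dot_eV, eV_dot_eV]
  simp [huv, huv.symm]
  norm_num

lemma pair_dot_disj {u v w z : V} (h1 : u ≠ w) (h2 : u ≠ z) (h3 : v ≠ w) (h4 : v ≠ z) :
    (eV u + eV v) ⬝ᵥ (eV w + eV z) = 0 := by
  rw [dotProduct_add, add_dotProduct, add_dotProduct,
    eV_dot_eV, eV_dot_eV, eV_dot_eV, eV_dot_eV]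
  simp [h1, h2, h3, h4]


/-- If `G` contains `2K₂` (two disjoint edges) as an induced subgraph, then `E(G) ≥ 2χ(G)`. -/
theorem energy_ge_two_chromatic_of_twoKtwo (G : SimpleGraph V)
    (h : Nonempty
      (disjUnion (⊤ : SimpleGraph (Fin 2)) (⊤ : SimpleGraph (Fin 2)) ↪g G)) :
    2 * (G.chromaticNumber.toNat : ℝ) ≤ energy G := by
  classical
  obtain ⟨f⟩ := h
  -- the four vertices
  set a := f (Sum.inl 0) with ha
  set b := f (Sum.inl 1) with hb
  set c := f (Sum.inr 0) with hc
  set d := f (Sum.inr 1) with hd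
  have hadj01 : (disjUnion (⊤ : SimpleGraph (Fin 2)) (⊤ : SimpleGraph (Fin 2))).Adj
      (Sum.inl 0) (Sum.inl 1) := by
    rw [disjUnion, SimpleGraph.fromRel_adj]
    exact ⟨by simp, Or.inl (Sum.LiftRel.inl (by simp))⟩
  have hadj23 : (disjUnion (⊤ : SimpleGraph (Fin 2)) (⊤ : SimpleGraph (Fin 2))).Adj
      (Sum.inr 0) (Sum.inr 1) := by
    rw [disjUnion, SimpleGraph.fromRel_adj]
    exact ⟨by simp, Or.inl (Sum.LiftRel.inr (by simp))⟩
  have hnadj : ∀ (i j : Fin 2), ¬ (disjUnion (⊤ : SimpleGraph (Fin 2))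
      (⊤ : SimpleGraph (Fin 2))).Adj (Sum.inl i) (Sum.inr j) := by
    intro i j hcon
    rw [disjUnion, SimpleGraph.fromRel_adj] at hcon
    rcases hcon with ⟨-, h' | h'⟩ <;> cases h'
  have hab : G.Adj a b := f.map_rel_iff.mpr hadj01
  have hcd : G.Adj c d := f.map_rel_iff.mpr hadj23
  have hac : ¬G.Adj a c := fun h' => hnadj 0 0 (f.map_rel_iff.mp h')
  have had : ¬G.Adj a d := fun h' => hnadj 0 1 (f.map_rel_iff.mp h')
  have hbc : ¬G.Adj b c := fun h' => hnadj 1 0 (f.map_rel_iff.mp h')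
  have hbd : ¬G.Adj b d := fun h' => hnadj 1 1 (f.map_rel_iff.mp h')
  have hane : a ≠ b := G.ne_of_adj hab
  have hcdne : c ≠ d := G.ne_of_adj hcd
  have hinj : Function.Injective f := f.injective
  have hac' : a ≠ c := fun h' => by simpa using hinj h'
  have had' : a ≠ d := fun h' => by simpa using hinj h'
  have hbc' : b ≠ c := fun h' => by simpa using hinj h'
  have hbd' : b ≠ d := fun h' => by simpa using hinj h'
  -- top eigenvalue
  obtain ⟨j1, -, hj1⟩ := Finset.exists_max_image Finset.univ (eig G) ⟨a, Finset.mem_univ a⟩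
  set lam := eig G j1 with hlam_def
  have hlam : ∀ j, eig G j ≤ lam := fun j => hj1 j (Finset.mem_univ j)
  -- the two test vectors
  set y1 : V → ℝ := eV a + eV b with hy1
  set y2 : V → ℝ := eV c + eV d with hy2
  have Q11 : y1 ⬝ᵥ (adjMat G *ᵥ y1) = 2 := pair_quad G hab
  have Q22 : y2 ⬝ᵥ (adjMat G *ᵥ y2) = 2 := pair_quad G hcd
  have Q12 : y1 ⬝ᵥ (adjMat G *ᵥ y2) = 0 := pair_cross G hac had hbc hbd
  have Q21 : y2 ⬝ᵥ (adjMat G *ᵥ y1) = 0 := pair_cross G (fun h' => hac (G.adj_symm h'))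
    (fun h' => hbc (G.adj_symm h')) (fun h' => had (G.adj_symm h')) (fun h' => hbd (G.adj_symm h'))
  have D11 : y1 ⬝ᵥ y1 = 2 := pair_dot_self hane
  have D22 : y2 ⬝ᵥ y2 = 2 := pair_dot_self hcdne
  have D12 : y1 ⬝ᵥ y2 = 0 := pair_dot_disj hac' had' hbc' hbd'
  set p := coord G y1 j1 with hp
  set q := coord G y2 j1 with hq
  have key : ∃ x : V → ℝ, coord G x j1 = 0 ∧ x ⬝ᵥ (adjMat G *ᵥ x) = x ⬝ᵥ x ∧ 0 < x ⬝ᵥ x := by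
    by_cases hpq : p = 0 ∧ q = 0
    · exact ⟨y1, by rw [← hp, hpq.1], by rw [Q11, D11], by rw [D11]; norm_num⟩
    · have D21 : y2 ⬝ᵥ y1 = 0 := by rw [dotProduct_comm]; exact D12
      have h2 : 0 < p^2 + q^2 := by
        rcases (not_and_or.mp hpq) with h' | h' <;> positivity
      have hdot : (q • y1 - p • y2) ⬝ᵥ (q • y1 - p • y2) = 2 * (p^2 + q^2) := by
        simp only [sub_dotProduct, dotProduct_sub, smul_dotProduct,
          dotProduct_smul, smul_eq_mul]
        rw [D11, D12, D21, D22]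
        ring
      have hquad : (q • y1 - p • y2) ⬝ᵥ (adjMat G *ᵥ (q • y1 - p • y2)) = 2 * (p^2 + q^2) := by
        rw [Matrix.mulVec_sub, Matrix.mulVec_smul, Matrix.mulVec_smul]
        simp only [sub_dotProduct, dotProduct_sub, smul_dotProduct,
          dotProduct_smul, smul_eq_mul]
        rw [Q11, Q12, Q21, Q22]
        ring
      refine ⟨q • y1 - p • y2, ?_, ?_, ?_⟩
      · rw [coord_sub, coord_smul, coord_smul]
        simp only [Pi.sub_apply, Pi.smul_apply, smul_eq_mul, ← hp, ← hq]
        ring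
      · rw [hdot, hquad]
      · rw [hdot]; linarith
  obtain ⟨x, hx0, hxq, hxpos⟩ := key
  -- second eigenvalue
  have herase : (Finset.univ.erase j1).Nonempty := by
    by_cases haj : a = j1
    · exact ⟨b, Finset.mem_erase.mpr ⟨fun h' => hane (haj.trans h'.symm), Finset.mem_univ b⟩⟩
    · exact ⟨a, Finset.mem_erase.mpr ⟨haj, Finset.mem_univ a⟩⟩
  obtain ⟨j2, hj2mem, hj2max⟩ := Finset.exists_max_image (Finset.univ.erase j1) (eig G) herase
  set mu := eig G j2 with hmu_def
  have hj2ne : j2 ≠ j1 := (Finset.mem_erase.mp hj2mem).1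
  have hmu1 : 1 ≤ mu := by
    have e1 : x ⬝ᵥ (adjMat G *ᵥ x) ≤ mu * (x ⬝ᵥ x) := by
      rw [quad_eq_sum_coord, dot_eq_sum_coord, Finset.mul_sum]
      rw [← Finset.add_sum_erase _ (fun j => eig G j * coord G x j ^ 2) (Finset.mem_univ j1),
        ← Finset.add_sum_erase _ (fun j => mu * coord G x j ^ 2) (Finset.mem_univ j1), hx0]
      simpa using Finset.sum_le_sum fun j hj => mul_le_mul_of_nonneg_right
        (hj2max j hj) (sq_nonneg (coord G x j))
    rw [hxq] at e1
    nlinarith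
  have hlam1 : 1 ≤ lam := le_trans hmu1 (hlam j2)
  have hlam0 : (0:ℝ) ≤ lam := le_trans zero_le_one hlam1
  -- chromatic number bound
  have hcol : G.Colorable (Nat.floor lam + 1) := by
    apply colorable_of
    intro t ht
    obtain ⟨v, hv, hdv⟩ := exists_low_degree G hlam t ht
    exact ⟨v, hv, Nat.lt_succ_of_le (Nat.le_floor hdv)⟩
  have hchi : (G.chromaticNumber.toNat : ℝ) ≤ lam + 1 := by
    have h1 : G.chromaticNumber ≤ (Nat.floor lam + 1 : ℕ) := hcol.chromaticNumber_le
    have h2 : G.chromaticNumber.toNat ≤ Nat.floor lam + 1 := ENat.toNat_le_of_le_coe h1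
    have h3 : (Nat.floor lam : ℝ) ≤ lam := Nat.floor_le hlam0
    calc (G.chromaticNumber.toNat : ℝ) ≤ ((Nat.floor lam + 1 : ℕ) : ℝ) := by exact_mod_cast h2
      _ ≤ lam + 1 := by push_cast; linarith
  -- energy computation
  have hE : energy G = 2 * ∑ j, max (eig G j) 0 := by
    have habs : ∀ r : ℝ, |r| = 2 * max r 0 - r := by
      intro r
      rcases le_or_gt 0 r with h' | h'
      · rw [abs_of_nonneg h', max_eq_left h']; ring
      · rw [abs_of_neg h', max_eq_right h'.le]; ring
    unfold energy
    rw [Finset.sum_congr rfl (fun j _ => habs (eig G j)), Finset.sum_sub_distrib,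
      sum_eig_eq_zero, ← Finset.mul_sum]
    ring
  have hsum : lam + 1 ≤ ∑ j, max (eig G j) 0 := by
    have hsub : ({j1, j2} : Finset V).sum (fun j => max (eig G j) 0) ≤
        ∑ j, max (eig G j) 0 :=
      Finset.sum_le_sum_of_subset_of_nonneg (Finset.subset_univ _)
        (fun j _ _ => le_max_right _ 0)
    rw [Finset.sum_pair (Ne.symm hj2ne)] at hsub
    rw [max_eq_left hlam0, max_eq_left (le_trans zero_le_one hmu1)] at hsub
    linarith
  rw [hE]
  linarith


end GraphEnergy
end
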